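/- Let Ω ⊂ ℝ² be a nondegenerate closed triangle of unit area, let k ≥ 0, N = 4^k, and let T_1,…,T_N be the standard level-k subdivision of Ω. Let f : Ω → ℝ be Lipschitz with constant L, and let X_1,…,X_N be independent random points with X_i uniformly distributed on T_i. Then the estimator (1/N)·Σ_{i=1}^{N} f(X_i) is unbiased for ∫_Ω f(x)dx, and E[((1/N)·Σ_{i=1}^{N} f(X_i) − ∫_Ω f(x)dx)²] ≤ L²·diam(Ω)²/N², where diam(Ω) is the diameter of Ω; in particular the mean squared error is O(1/N²). -/

import Mathlib

open MeasureTheory Filter Real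

noncomputable section

/-- Points of the plane. -/
abbrev Pt := ℝ × ℝ

/-- The (closed) triangle with vertices `A`, `B`, `C`: their convex hull. -/
def triangle (A B C : Pt) : Set Pt := convexHull ℝ {A, B, C}

/-- The triangle `Δ(A,B,C)` is nondegenerate iff `A`, `B`, `C` are not collinear. -/
def Nondeg (A B C : Pt) : Prop := ¬ Collinear ℝ ({A, B, C} : Set Pt)

/-- Two-dimensional Lebesgue volume, as a real number. -/
def vol (S : Set Pt) : ℝ := (volume S).toReal

/-- Signed discrepancy `δ_N(S; P, Ω)` of the list of points `P` at the set `S`,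
relative to the domain `Ω`. -/
def sdisc {N : ℕ} (S : Set Pt) (P : Fin N → Pt) (Ω : Set Pt) : ℝ :=
  vol (S ∩ Ω) / vol Ω - (Nat.card {i : Fin N // P i ∈ S} : ℝ) / N

/-- Discrepancy `D_N(𝒮; P, Ω)`: supremum of the absolute signed discrepancy
over a class `𝒮` of sets. -/
def Disc {N : ℕ} (𝒮 : Set (Set Pt)) (P : Fin N → Pt) (Ω : Set Pt) : ℝ :=
  ⨆ S ∈ 𝒮, |sdisc S P Ω|

/-- The half-open parallelogram `𝒯_{a,b,C}` anchored at `C` with sides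
`a(A-C)` and `b(B-C)`. -/
def parlg (A B C : Pt) (a b : ℝ) : Set Pt :=
  {x | ∃ s t : ℝ, 0 ≤ s ∧ s < a ∧ 0 ≤ t ∧ t < b ∧ x = C + s • (A - C) + t • (B - C)}

/-- The family `𝒮_C` of parallelograms anchored at `C`, intersected with the triangle. -/
def anchoredFam (A B C : Pt) : Set (Set Pt) :=
  {S | ∃ a b : ℝ, 0 < a ∧ a ≤ 1 ∧ 0 < b ∧ b ≤ 1 ∧ S = parlg A B C a b ∩ triangle A B C}

/-- The class `𝒮_A ∪ 𝒮_B ∪ 𝒮_C` of anchored parallelograms of the triangle `Δ(A,B,C)`. -/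
def parFam (A B C : Pt) : Set (Set Pt) :=
  anchoredFam B C A ∪ anchoredFam A C B ∪ anchoredFam A B C

/-- The parallelogram discrepancy `D_N^P(P; Δ(A,B,C))`. -/
def parDisc {N : ℕ} (P : Fin N → Pt) (A B C : Pt) : ℝ :=
  Disc (parFam A B C) P (triangle A B C)

/-- Midpoint of two points. -/
def mid (P Q : Pt) : Pt := (2⁻¹ : ℝ) • (P + Q)

/-- A triangle recorded as the (ordered) triple of its vertices. -/
abbrev Tri2 := Pt × Pt × Pt

/-- The centroid of a triangle: the average of its three vertices. -/
def ctr (T : Tri2) : Pt := (3⁻¹ : ℝ) • (T.1 + T.2.1 + T.2.2)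

/-- The point set of a triangle given by its vertices. -/
def triSet (T : Tri2) : Set Pt := triangle T.1 T.2.1 T.2.2

/-- The four-way subdivision of a triangle: subtriangle number `d ∈ {0,1,2,3}`. -/
def subdiv (T : Tri2) (d : ℕ) : Tri2 :=
  let A := T.1; let B := T.2.1; let C := T.2.2
  if d = 0 then (mid B C, mid A C, mid A B)
  else if d = 1 then (A, mid A B, mid A C)
  else if d = 2 then (mid A B, B, mid B C)
  else (mid A C, mid B C, C)

/-- The triangular van der Corput point `f_T(i)`: digits of `i` in base `4` select a
nested subtriangle, and `f_T(i)` is its centroid. -/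
def vdc (T : Tri2) (i : ℕ) : Pt :=
  if h : i = 0 then ctr T else vdc (subdiv T (i % 4)) (i / 4)
termination_by i
decreasing_by exact Nat.div_lt_self (Nat.pos_of_ne_zero h) (by norm_num)

/-- The `i`-th subtriangle (for `i < 4^k`) of the standard level-`k` subdivision of `T`,
indexed by the base-4 digits of `i`. -/
def subdivAt (T : Tri2) : ℕ → ℕ → Tri2
  | 0, _ => T
  | (k+1), i => subdiv (subdivAt T k (i / 4)) (i % 4)

/-- The standard level-`k` subdivision of a triangle: the set of the `4^k` congruent
subtriangles obtained by `k` recursive four-way subdivisions. -/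
def level (T : Tri2) : ℕ → Set Tri2
  | 0 => {T}
  | (k+1) => {S | ∃ S' ∈ level T k, ∃ d < 4, S = subdiv S' d}

/-- Riemann integrability (in the triangular-subdivision sense) of `f` on the closed
triangle `T`, with integral mean `μ`: every sequence of tagged Riemann sums over the
level-`k` subdivisions converges to `μ`. -/
def RiemannMean (T : Tri2) (f : Pt → ℝ) (μ : ℝ) : Prop :=
  ∀ x : ℕ → ℕ → Pt, (∀ k i, i < 4^k → x k i ∈ triSet (subdivAt T k i)) →
    Tendsto (fun k => (4^k : ℝ)⁻¹ * ∑ i ∈ Finset.range (4^k), f (x k i)) atTop (nhds μ)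

/-- A real number is a quadratic irrational if it has the form `(a + b√c)/d` with
integers `a,b,c,d`, `b ≠ 0`, `d ≠ 0`, `c > 0` and `c` not a perfect square. -/
def QuadIrr (θ : ℝ) : Prop :=
  ∃ a b c d : ℤ, b ≠ 0 ∧ d ≠ 0 ∧ 0 < c ∧ (∀ m : ℤ, c ≠ m ^ 2) ∧
    θ = ((a : ℝ) + (b : ℝ) * Real.sqrt (c : ℝ)) / (d : ℝ)

/-- Distance from a real number to the nearest integer. -/
def distToInt (x : ℝ) : ℝ := |x - round x|

/-- A real number `θ` is badly approximable if `n‖nθ‖ > c` for all positive `n`,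
for some constant `c > 0`. -/
def BadlyApprox (θ : ℝ) : Prop :=
  ∃ c : ℝ, 0 < c ∧ ∀ n : ℕ, 0 < n → c < (n : ℝ) * distToInt ((n : ℝ) * θ)

end

/-!
Each piece of the four-way subdivision is the image of its parent under a homothety of ratio
`±1/2`, so the `N = 4^k` level-`k` pieces `Tᵢ` have area `1/N` and diameter at most
`diam Ω / 2^k`; as they cover `Ω` and their areas add up to `vol Ω`, the restrictions of
Lebesgue measure to the `Tᵢ` add up to its restriction to `Ω`. Hence `E f(Xᵢ) = N ∫_{Tᵢ} f`,
which sums to unbiasedness. By independence the variance of `∑ f(Xᵢ)` is the sum of the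
variances, and `f(Xᵢ)` lies in an interval of length `2 L diam Ω / 2^k`, so by Popoviciu's
inequality each variance is at most `L² diam(Ω)² / N`.
-/

open Set Metric ProbabilityTheory
open scoped ENNReal

theorem MeasureTheory.Measure.sum_restrict_eq_restrict_of_subset_iUnion {α ι : Type*}
    [MeasurableSpace α] [Fintype ι] {μ : Measure α} {s : ι → Set α} {t : Set α}
    (hcover : t ⊆ ⋃ i, s i) (hsum : ∑ i, μ (s i) = μ t) (ht : μ t ≠ ∞) :
    ∑ i, μ.restrict (s i) = μ.restrict t := by
  have : IsFiniteMeasure (μ.restrict t) := isFiniteMeasure_restrict.mpr ht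
  refine (eq_of_le_of_measure_univ_eq ?_ ?_).symm
  · calc μ.restrict t ≤ μ.restrict (⋃ i, s i) := restrict_mono hcover le_rfl
      _ ≤ sum fun i ↦ μ.restrict (s i) := restrict_iUnion_le
      _ = ∑ i, μ.restrict (s i) := sum_fintype _
  · simp [hsum]

lemma AffineMap.lipschitzWith_homothety {E : Type*} [SeminormedAddCommGroup E] [NormedSpace ℝ E]
    (c : E) (r : ℝ) : LipschitzWith ‖r‖₊ (AffineMap.homothety c r) := by
  refine LipschitzWith.of_dist_le_mul fun x y ↦ le_of_eq ?_
  simp only [AffineMap.homothety_apply, vsub_eq_sub, vadd_eq_add, dist_eq_norm, coe_nnnorm]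
  rw [show r • (x - c) + c - (r • (y - c) + c) = r • (x - y) by module, norm_smul]

namespace MeasureTheory.pdf.IsUniform

variable {Ω E : Type*} [MeasurableSpace Ω] [MeasurableSpace E] {P : Measure Ω} {μ : Measure E}
  {X : Ω → E} {s : Set E} {f : E → ℝ} {δ : ℝ}

lemma aestronglyMeasurable_comp (hu : IsUniform X s P μ) (hX : AEMeasurable X P)
    (hf : AEStronglyMeasurable f (μ.restrict s)) : AEStronglyMeasurable (fun ω ↦ f (X ω)) P := by
  have hfX : AEStronglyMeasurable f (P.map X) := by rw [hu]; exact hf.smul_measure _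
  exact hfX.comp_aemeasurable hX

lemma integral_comp (hu : IsUniform X s P μ) (hX : AEMeasurable X P)
    (hf : AEStronglyMeasurable f (μ.restrict s)) :
    ∫ ω, f (X ω) ∂P = (μ s)⁻¹.toReal * ∫ x in s, f x ∂μ := by
  rw [← integral_map hX (by rw [hu]; exact hf.smul_measure _), hu, ProbabilityTheory.cond,
    integral_smul_measure, smul_eq_mul]

lemma ae_mem (hu : IsUniform X s P μ) (hX : AEMeasurable X P) (hs : MeasurableSet s) :
    ∀ᵐ ω ∂P, X ω ∈ s :=
  ae_of_ae_map hX (by rw [hu]; exact Measure.ae_smul_measure (ae_restrict_mem hs) _)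

variable [IsProbabilityMeasure P]

lemma exists_ae_comp_mem_Icc (hu : IsUniform X s P μ) (hX : AEMeasurable X P)
    (hs : MeasurableSet s) (hosc : ∀ x ∈ s, ∀ y ∈ s, |f x - f y| ≤ δ) :
    ∃ c, ∀ᵐ ω ∂P, f (X ω) ∈ Icc (c - δ) (c + δ) := by
  obtain ⟨ω₀, hω₀⟩ := (hu.ae_mem hX hs).exists
  refine ⟨f (X ω₀), ?_⟩
  filter_upwards [hu.ae_mem hX hs] with ω hω
  have := abs_sub_le_iff.mp (hosc _ hω _ hω₀)
  constructor <;> linarith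

lemma memLp_comp (hu : IsUniform X s P μ) (hX : AEMeasurable X P) (hs : MeasurableSet s)
    (hf : AEStronglyMeasurable f (μ.restrict s)) (hosc : ∀ x ∈ s, ∀ y ∈ s, |f x - f y| ≤ δ)
    (p : ℝ≥0∞) : MemLp (fun ω ↦ f (X ω)) p P := by
  obtain ⟨c, hc⟩ := hu.exists_ae_comp_mem_Icc hX hs hosc
  exact memLp_of_bounded hc (hu.aestronglyMeasurable_comp hX hf) p

lemma variance_comp_le (hu : IsUniform X s P μ) (hX : AEMeasurable X P) (hs : MeasurableSet s)
    (hf : AEStronglyMeasurable f (μ.restrict s)) (hosc : ∀ x ∈ s, ∀ y ∈ s, |f x - f y| ≤ δ) :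
    Var[fun ω ↦ f (X ω); P] ≤ δ ^ 2 := by
  obtain ⟨c, hc⟩ := hu.exists_ae_comp_mem_Icc hX hs hosc
  calc Var[fun ω ↦ f (X ω); P] ≤ ((c + δ - (c - δ)) / 2) ^ 2 :=
        variance_le_sq_of_bounded hc (hu.aestronglyMeasurable_comp hX hf).aemeasurable
    _ = δ ^ 2 := by ring

end MeasureTheory.pdf.IsUniform

section StratifiedSampling

open pdf

variable {Ω E ι : Type*} [MeasurableSpace Ω] [MeasurableSpace E] [Fintype ι]
  {P : Measure Ω} [IsProbabilityMeasure P] {μ : Measure E} {X : ι → Ω → E} {s : ι → Set E}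
  {f : E → ℝ} {δ : ℝ}

theorem variance_sum_comp_le (hu : ∀ i, IsUniform (X i) (s i) P μ)
    (hX : ∀ i, AEMeasurable (X i) P) (hind : iIndepFun X P) (hs : ∀ i, MeasurableSet (s i))
    (hf : ∀ i, AEStronglyMeasurable f (μ.restrict (s i)))
    (hosc : ∀ i, ∀ x ∈ s i, ∀ y ∈ s i, |f x - f y| ≤ δ) :
    Var[fun ω ↦ ∑ i, f (X i ω); P] ≤ Fintype.card ι * δ ^ 2 := by
  have hfX : ∀ i, AEMeasurable f (P.map (X i)) := fun i ↦ by
    rw [hu i]; exact ((hf i).smul_measure _).aemeasurable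
  have hind' : iIndepFun (fun i ω ↦ f (X i ω)) P := hind.comp₀ (fun _ ↦ f) hX hfX
  calc Var[fun ω ↦ ∑ i, f (X i ω); P] = ∑ i, Var[fun ω ↦ f (X i ω); P] := by
        rw [← Finset.sum_fn]
        exact IndepFun.variance_sum (fun i _ ↦ (hu i).memLp_comp (hX i) (hs i) (hf i) (hosc i) 2)
          fun i _ j _ hij ↦ hind'.indepFun hij
    _ ≤ ∑ _i : ι, δ ^ 2 :=
        Finset.sum_le_sum fun i _ ↦ (hu i).variance_comp_le (hX i) (hs i) (hf i) (hosc i)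
    _ = Fintype.card ι * δ ^ 2 := by simp

end StratifiedSampling

lemma mem_triangle_of_barycentric {A B C x : Pt} {α β γ : ℝ} (hα : 0 ≤ α) (hβ : 0 ≤ β)
    (hγ : 0 ≤ γ) (hsum : α + β + γ = 1) (hx : x = α • A + β • B + γ • C) : x ∈ triangle A B C := by
  have := (convex_convexHull ℝ {A, B, C}).sum_mem (t := Finset.univ) (w := ![α, β, γ])
    (z := ![A, B, C]) (by simp [Fin.forall_fin_succ, hα, hβ, hγ])
    (by simp [Fin.sum_univ_three, hsum])
    (fun i _ ↦ subset_convexHull ℝ _ (by fin_cases i <;> simp))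
  unfold triangle
  simpa [Fin.sum_univ_three, hx] using this

lemma exists_barycentric_of_mem_triangle {A B C x : Pt} (hx : x ∈ triangle A B C) :
    ∃ α β γ : ℝ, 0 ≤ α ∧ 0 ≤ β ∧ 0 ≤ γ ∧ α + β + γ = 1 ∧ x = α • A + β • B + γ • C := by
  suffices triangle A B C ⊆
      {x | ∃ α β γ : ℝ, 0 ≤ α ∧ 0 ≤ β ∧ 0 ≤ γ ∧ α + β + γ = 1 ∧ x = α • A + β • B + γ • C} from
    this hx
  refine convexHull_min ?_ ?_
  · simp only [insert_subset_iff, singleton_subset_iff, mem_ofPred_eq]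
    exact ⟨⟨1, 0, 0, by norm_num⟩, ⟨0, 1, 0, by norm_num⟩, ⟨0, 0, 1, by norm_num⟩⟩
  · rintro _ ⟨α, β, γ, hα, hβ, hγ, h, rfl⟩ _ ⟨α', β', γ', hα', hβ', hγ', h', rfl⟩ a b ha hb hab
    exact ⟨a * α + b * α', a * β + b * β', a * γ + b * γ', by positivity, by positivity,
      by positivity, by linear_combination a * h + b * h' + hab, by module⟩

lemma mid_mem_of_convex {s : Set Pt} (hs : Convex ℝ s) {P Q : Pt} (hP : P ∈ s) (hQ : Q ∈ s) :
    mid P Q ∈ s := by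
  simpa [mid, smul_add] using hs hP hQ (by norm_num : (0 : ℝ) ≤ 2⁻¹) (by norm_num) (by norm_num)

lemma triSet_subdiv_subset (S : Tri2) (d : ℕ) : triSet (subdiv S d) ⊆ triSet S := by
  obtain ⟨A, B, C⟩ := S
  have hcvx : Convex ℝ (triangle A B C) := convex_convexHull ℝ _
  have hA : A ∈ triangle A B C := subset_convexHull ℝ _ (by simp)
  have hB : B ∈ triangle A B C := subset_convexHull ℝ _ (by simp)
  have hC : C ∈ triangle A B C := subset_convexHull ℝ _ (by simp)
  refine convexHull_min ?_ hcvx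
  unfold subdiv
  split_ifs <;> simp only [insert_subset_iff, singleton_subset_iff] <;> refine ⟨?_, ?_, ?_⟩ <;>
    first | assumption | exact mid_mem_of_convex hcvx (by assumption) (by assumption)

lemma triSet_subset_iUnion_subdiv (S : Tri2) : triSet S ⊆ ⋃ d : Fin 4, triSet (subdiv S d) := by
  obtain ⟨A, B, C⟩ := S
  intro x hx
  obtain ⟨α, β, γ, hα, hβ, hγ, hsum, rfl⟩ := exists_barycentric_of_mem_triangle hx
  obtain rfl : α = 1 - β - γ := by linarith
  simp only [mem_iUnion]
  -- the corner piece at a vertex whose barycentric coordinate is at least `1/2`, else the middle one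
  rcases le_or_gt 2⁻¹ (1 - β - γ) with h1 | h1
  · exact ⟨1, mem_triangle_of_barycentric (α := 1 - 2 * β - 2 * γ) (β := 2 * β) (γ := 2 * γ)
      (by linarith) (by linarith) (by linarith) (by ring) (by simp [subdiv, mid]; module)⟩
  rcases le_or_gt 2⁻¹ β with h2 | h2
  · exact ⟨2, mem_triangle_of_barycentric (α := 2 - 2 * β - 2 * γ) (β := 2 * β - 1) (γ := 2 * γ)
      (by linarith) (by linarith) (by linarith) (by ring) (by simp [subdiv, mid]; module)⟩
  rcases le_or_gt 2⁻¹ γ with h3 | h3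
  · exact ⟨3, mem_triangle_of_barycentric (α := 2 - 2 * β - 2 * γ) (β := 2 * β) (γ := 2 * γ - 1)
      (by linarith) (by linarith) (by linarith) (by ring) (by simp [subdiv, mid]; module)⟩
  · exact ⟨0, mem_triangle_of_barycentric (α := 2 * β + 2 * γ - 1) (β := 1 - 2 * β)
      (γ := 1 - 2 * γ) (by linarith) (by linarith) (by linarith) (by ring)
      (by simp [subdiv, mid]; module)⟩

lemma image_homothety_triangle (c : Pt) (r : ℝ) (A B C : Pt) :
    AffineMap.homothety c r '' triangle A B C =
      triangle (AffineMap.homothety c r A) (AffineMap.homothety c r B)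
        (AffineMap.homothety c r C) := by
  simp [triangle, AffineMap.image_convexHull, image_insert_eq]

-- the corner pieces shrink towards a vertex, the middle piece is reflected through the centroid
lemma exists_triSet_subdiv_eq_image_homothety (S : Tri2) (d : ℕ) :
    ∃ c : Pt, ∃ r : ℝ, |r| = 2⁻¹ ∧
      triSet (subdiv S d) = AffineMap.homothety c r '' triSet S := by
  obtain ⟨A, B, C⟩ := S
  suffices ∃ c : Pt, ∃ r : ℝ, |r| = 2⁻¹ ∧ subdiv (A, B, C) d =
      (AffineMap.homothety c r A, AffineMap.homothety c r B, AffineMap.homothety c r C) by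
    obtain ⟨c, r, hr, h⟩ := this
    exact ⟨c, r, hr, by rw [h]; exact (image_homothety_triangle c r A B C).symm⟩
  unfold subdiv
  split_ifs
  · refine ⟨ctr (A, B, C), -2⁻¹, by norm_num, ?_⟩
    simp only [AffineMap.homothety_apply, vsub_eq_sub, vadd_eq_add, ctr, mid, Prod.mk.injEq]
    refine ⟨?_, ?_, ?_⟩ <;> module
  · refine ⟨A, 2⁻¹, by norm_num, ?_⟩
    simp only [AffineMap.homothety_apply, vsub_eq_sub, vadd_eq_add, mid, Prod.mk.injEq]
    refine ⟨?_, ?_, ?_⟩ <;> module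
  · refine ⟨B, 2⁻¹, by norm_num, ?_⟩
    simp only [AffineMap.homothety_apply, vsub_eq_sub, vadd_eq_add, mid, Prod.mk.injEq]
    refine ⟨?_, ?_, ?_⟩ <;> module
  · refine ⟨C, 2⁻¹, by norm_num, ?_⟩
    simp only [AffineMap.homothety_apply, vsub_eq_sub, vadd_eq_add, mid, Prod.mk.injEq]
    refine ⟨?_, ?_, ?_⟩ <;> module

lemma isCompact_triSet (S : Tri2) : IsCompact (triSet S) :=
  (toFinite {S.1, S.2.1, S.2.2}).isCompact_convexHull ℝ

lemma measurableSet_triSet (S : Tri2) : MeasurableSet (triSet S) :=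
  (isCompact_triSet S).isClosed.measurableSet

lemma volume_triSet_subdiv (S : Tri2) (d : ℕ) :
    volume (triSet (subdiv S d)) = 4⁻¹ * volume (triSet S) := by
  obtain ⟨c, r, hr, h⟩ := exists_triSet_subdiv_eq_image_homothety S d
  rw [h, Measure.addHaar_image_homothety, abs_pow, hr, Module.finrank_prod,
    Module.finrank_self, inv_pow, ENNReal.ofReal_inv_of_pos (by norm_num)]
  norm_num

lemma diam_triSet_subdiv_le (S : Tri2) (d : ℕ) :
    diam (triSet (subdiv S d)) ≤ diam (triSet S) / 2 := by
  obtain ⟨c, r, hr, h⟩ := exists_triSet_subdiv_eq_image_homothety S d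
  rw [h]
  calc diam (AffineMap.homothety c r '' triSet S) ≤ ‖r‖₊ * diam (triSet S) :=
        (AffineMap.lipschitzWith_homothety c r).diam_image_le _ (isCompact_triSet S).isBounded
    _ = diam (triSet S) / 2 := by rw [coe_nnnorm, Real.norm_eq_abs, hr]; ring

lemma sum_restrict_triSet_subdiv (S : Tri2) :
    ∑ d : Fin 4, volume.restrict (triSet (subdiv S d)) = volume.restrict (triSet S) := by
  refine Measure.sum_restrict_eq_restrict_of_subset_iUnion
    (triSet_subset_iUnion_subdiv S) ?_ (isCompact_triSet S).measure_lt_top.ne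
  simp only [volume_triSet_subdiv, Finset.sum_const, Finset.card_univ, Fintype.card_fin]
  rw [nsmul_eq_mul, ← mul_assoc, Nat.cast_ofNat,
    ENNReal.mul_inv_cancel (by norm_num) (by norm_num), one_mul]

lemma subdivAt_succ_add_mul (T : Tri2) (k j : ℕ) {d : ℕ} (hd : d < 4) :
    subdivAt T (k + 1) (d + 4 * j) = subdiv (subdivAt T k j) d := by
  simp only [subdivAt]
  congr 2 <;> omega

lemma triSet_subdivAt_subset (T : Tri2) (k i : ℕ) : triSet (subdivAt T k i) ⊆ triSet T := by
  induction k generalizing i with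
  | zero => rfl
  | succ k ih => exact (triSet_subdiv_subset _ _).trans (ih _)

lemma volume_triSet_subdivAt (T : Tri2) (k i : ℕ) :
    volume (triSet (subdivAt T k i)) = 4⁻¹ ^ k * volume (triSet T) := by
  induction k generalizing i with
  | zero => simp [subdivAt]
  | succ k ih => rw [subdivAt, volume_triSet_subdiv, ih, pow_succ']; ring

lemma diam_triSet_subdivAt_le (T : Tri2) (k i : ℕ) :
    diam (triSet (subdivAt T k i)) ≤ diam (triSet T) / 2 ^ k := by
  induction k generalizing i with
  | zero => simp [subdivAt]
  | succ k ih =>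
    calc diam (triSet (subdivAt T (k + 1) i)) ≤ diam (triSet (subdivAt T k (i / 4))) / 2 :=
          diam_triSet_subdiv_le _ _
      _ ≤ diam (triSet T) / 2 ^ k / 2 := by gcongr; exact ih _
      _ = diam (triSet T) / 2 ^ (k + 1) := by ring

lemma sum_restrict_triSet_subdivAt (T : Tri2) (k : ℕ) :
    ∑ i : Fin (4 ^ k), volume.restrict (triSet (subdivAt T k i)) =
      volume.restrict (triSet T) := by
  induction k with
  | zero => simp [subdivAt]
  | succ k ih =>
    rw [← ih]
    calc ∑ i : Fin (4 ^ (k + 1)), volume.restrict (triSet (subdivAt T (k + 1) i))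
        = ∑ p : Fin (4 ^ k) × Fin 4, volume.restrict (triSet (subdiv (subdivAt T k p.1) p.2)) :=
          (Fintype.sum_equiv finProdFinEquiv _ _ fun p ↦ by
            rw [← subdivAt_succ_add_mul T k p.1 p.2.is_lt]; rfl).symm
      _ = ∑ j : Fin (4 ^ k), volume.restrict (triSet (subdivAt T k j)) := by
          rw [Fintype.sum_prod_type]
          exact Finset.sum_congr rfl fun j _ ↦ sum_restrict_triSet_subdiv (subdivAt T k j)

lemma integral_triSet_eq_sum_subdivAt (T : Tri2) (k : ℕ) {f : Pt → ℝ}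
    (hf : IntegrableOn f (triSet T)) :
    ∫ x in triSet T, f x = ∑ i : Fin (4 ^ k), ∫ x in triSet (subdivAt T k i), f x := by
  rw [← sum_restrict_triSet_subdivAt T k, integral_finsetSum_measure]
  exact fun i _ ↦ hf.mono_set (triSet_subdivAt_subset T k i)

lemma toReal_inv_volume_triSet_subdivAt (T : Tri2) (hvol : vol (triSet T) = 1) (k i : ℕ) :
    (volume (triSet (subdivAt T k i)))⁻¹.toReal = 4 ^ k := by
  rw [volume_triSet_subdivAt, (ENNReal.toReal_eq_one_iff _).mp hvol, mul_one, ← ENNReal.inv_pow,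
    inv_inv, ENNReal.toReal_pow]
  norm_num

lemma abs_sub_le_of_mem_triSet_subdivAt {T : Tri2} {f : Pt → ℝ} {L : ℝ} (hL : 0 ≤ L)
    (hf : ∀ x ∈ triSet T, ∀ y ∈ triSet T, |f x - f y| ≤ L * dist x y) (k i : ℕ) :
    ∀ x ∈ triSet (subdivAt T k i), ∀ y ∈ triSet (subdivAt T k i),
      |f x - f y| ≤ L * (diam (triSet T) / 2 ^ k) := fun x hx y hy ↦
  calc |f x - f y| ≤ L * dist x y :=
        hf x (triSet_subdivAt_subset T k i hx) y (triSet_subdivAt_subset T k i hy)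
    _ ≤ L * diam (triSet (subdivAt T k i)) := by
        gcongr; exact dist_le_diam_of_mem (isCompact_triSet _).isBounded hx hy
    _ ≤ L * (diam (triSet T) / 2 ^ k) := by gcongr; exact diam_triSet_subdivAt_le T k i

open ProbabilityTheory in
theorem stratified_sampling_mse_general {Ω' : Type*} [MeasurableSpace Ω']
    (Pm : Measure Ω') [IsProbabilityMeasure Pm]
    (T : Tri2) (hvol : vol (triSet T) = 1)
    (k : ℕ) (f : Pt → ℝ) (L : ℝ) (hL : 0 ≤ L)
    (hf : ∀ x ∈ triSet T, ∀ y ∈ triSet T, |f x - f y| ≤ L * dist x y)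
    (X : Fin (4 ^ k) → Ω' → Pt) (hXm : ∀ i, Measurable (X i))
    (hindep : iIndepFun X Pm)
    (hlaw : ∀ i : Fin (4 ^ k), Measure.map (X i) Pm =
      (volume (triSet (subdivAt T k (i : ℕ))))⁻¹ •
        volume.restrict (triSet (subdivAt T k (i : ℕ)))) :
    (∫ ω, (4 ^ k : ℝ)⁻¹ * ∑ i : Fin (4 ^ k), f (X i ω) ∂Pm) = (∫ x in triSet T, f x) ∧
    (∫ ω, ((4 ^ k : ℝ)⁻¹ * ∑ i : Fin (4 ^ k), f (X i ω) - ∫ x in triSet T, f x) ^ 2 ∂Pm)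
      ≤ L ^ 2 * Metric.diam (triSet T) ^ 2 / ((4 ^ k : ℝ)) ^ 2 := by
  have hu : ∀ i, pdf.IsUniform (X i) (triSet (subdivAt T k i)) Pm := hlaw
  have hX i : AEMeasurable (X i) Pm := (hXm i).aemeasurable
  have hs (i : Fin (4 ^ k)) := measurableSet_triSet (subdivAt T k i)
  have hosc (i : Fin (4 ^ k)) := abs_sub_le_of_mem_triSet_subdivAt hL hf k i
  have hcont : ContinuousOn f (triSet T) :=
    (LipschitzOnWith.of_dist_le_mul fun x hx y hy ↦ by
      rw [Real.dist_eq, Real.coe_toNNReal L hL]; exact hf x hx y hy).continuousOn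
  have hfm (i : Fin (4 ^ k)) :=
    (hcont.mono (triSet_subdivAt_subset T k i)).aestronglyMeasurable (μ := volume) (hs i)
  have hint i : Integrable (fun ω ↦ f (X i ω)) Pm :=
    ((hu i).memLp_comp (hX i) (hs i) (hfm i) (hosc i) 1).integrable le_rfl
  have hunbiased :
      ∫ ω, (4 ^ k : ℝ)⁻¹ * ∑ i, f (X i ω) ∂Pm = ∫ x in triSet T, f x := by
    simp only [integral_const_mul, integral_finsetSum _ fun i _ ↦ hint i,
      fun i ↦ (hu i).integral_comp (hX i) (hfm i), toReal_inv_volume_triSet_subdivAt T hvol,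
      ← Finset.mul_sum]
    rw [inv_mul_cancel_left₀ (by positivity),
      integral_triSet_eq_sum_subdivAt T k (hcont.integrableOn_compact (isCompact_triSet T))]
  refine ⟨hunbiased, ?_⟩
  rw [← hunbiased, ← variance_eq_integral
    ((integrable_finsetSum _ fun i _ ↦ hint i).const_mul _).aemeasurable, variance_const_mul]
  calc ((4 ^ k : ℝ)⁻¹) ^ 2 * Var[fun ω ↦ ∑ i, f (X i ω); Pm]
      ≤ ((4 ^ k : ℝ)⁻¹) ^ 2 * (4 ^ k * (L * (diam (triSet T) / 2 ^ k)) ^ 2) := by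
        gcongr
        simpa using variance_sum_comp_le hu hX hindep hs hfm hosc
    _ = L ^ 2 * diam (triSet T) ^ 2 / (4 ^ k : ℝ) ^ 2 := by
        rw [show (4 : ℝ) ^ k = (2 ^ k) ^ 2 by rw [← pow_mul, mul_comm, pow_mul]; norm_num]
        field_simp

open ProbabilityTheory in
/-- stratified sampling over the level-`k` subdivision of a unit-area
triangle: with one uniform point per subtriangle, independently, the equal-weight
estimator is unbiased for `∫_Ω f` and its mean squared error is at most
`L²·diam(Ω)²/N²` for an `L`-Lipschitz integrand. -/
theorem stratified_sampling_mse {Ω' : Type*} [MeasurableSpace Ω']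
    (Pm : Measure Ω') [IsProbabilityMeasure Pm]
    (T : Tri2) (h : Nondeg T.1 T.2.1 T.2.2) (hvol : vol (triSet T) = 1)
    (k : ℕ) (f : Pt → ℝ) (L : ℝ) (hL : 0 ≤ L)
    (hf : ∀ x ∈ triSet T, ∀ y ∈ triSet T, |f x - f y| ≤ L * dist x y)
    (X : Fin (4 ^ k) → Ω' → Pt) (hXm : ∀ i, Measurable (X i))
    (hindep : iIndepFun X Pm)
    (hlaw : ∀ i : Fin (4 ^ k), Measure.map (X i) Pm =
      (volume (triSet (subdivAt T k (i : ℕ))))⁻¹ •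
        volume.restrict (triSet (subdivAt T k (i : ℕ)))) :
    (∫ ω, (4 ^ k : ℝ)⁻¹ * ∑ i : Fin (4 ^ k), f (X i ω) ∂Pm) = (∫ x in triSet T, f x) ∧
    (∫ ω, ((4 ^ k : ℝ)⁻¹ * ∑ i : Fin (4 ^ k), f (X i ω) - ∫ x in triSet T, f x) ^ 2 ∂Pm)
      ≤ L ^ 2 * Metric.diam (triSet T) ^ 2 / ((4 ^ k : ℝ)) ^ 2 :=
  stratified_sampling_mse_general Pm T hvol k f L hL hf X hXm hindep hlaw
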